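/- Let 0 < α < ∞, let H be a set of probability measures and Q a probability measure on Ω, let U be a utility function on [0, 1/α] with lim_{x↓0} U'(x) = ∞, and let E_α be the set of valid level-α continuous tests for H. Then any maximizer ε* of ε ↦ E_Q[U(ε)] over E_α satisfies ε* > 0 Q-almost surely. -/

import Mathlib

open MeasureTheory ENNReal NNReal Set

/-- A utility function `U : [0, 1/α] → [0, ∞]` with derivative `U' = D`:
`U 0 = 0`, `U` is non-decreasing, concave and continuous on `[0, 1/α]`, finite
and differentiable (in real coordinates) on the interior of its domain, and its
derivative `D` is continuous and decreasing on `[0, 1/α]`. -/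
structure IsUtility (α : ℝ≥0∞) (U D : ℝ≥0∞ → ℝ≥0∞) : Prop where
  map_zero : U 0 = 0
  monotoneOn : MonotoneOn U (Icc 0 α⁻¹)
  concaveOn : ∀ x ∈ Icc (0 : ℝ≥0∞) α⁻¹, ∀ y ∈ Icc (0 : ℝ≥0∞) α⁻¹,
    ∀ t : ℝ≥0∞, t ≤ 1 → t * U x + (1 - t) * U y ≤ U (t * x + (1 - t) * y)
  continuousOn : ContinuousOn U (Icc 0 α⁻¹)
  finite_of_lt : ∀ x : ℝ≥0∞, x < α⁻¹ → U x ≠ ∞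
  deriv_finite : ∀ x : ℝ≥0∞, 0 < x → x < α⁻¹ → D x ≠ ∞
  hasDerivAt : ∀ x : ℝ, 0 < x → ENNReal.ofReal x < α⁻¹ →
    HasDerivAt (fun t : ℝ => (U (ENNReal.ofReal t)).toReal)
      ((D (ENNReal.ofReal x)).toReal) x
  deriv_continuousOn : ContinuousOn D (Icc 0 α⁻¹)
  deriv_antitoneOn : AntitoneOn D (Icc 0 α⁻¹)

/-!
If `Q {ε* = 0} > 0`, mix `ε*` with the valid constant test `c = min 1 α⁻¹` in proportion
`t = v / c`. The mixture is still valid, and concavity of `U` with `U 0 = 0` shows that it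
gains at least `U v · Q {ε* = 0}` in expected utility while losing at most `t · E_Q[U(ε*)]`.
Optimality therefore gives `(U v / v) · Q {ε* = 0} ≤ E_Q[U(ε*)] / c`, and `U v / v → ∞`
as `v ↓ 0` by the mean value theorem, because `U' → U'(0) = ∞`.
-/

open Filter Topology

theorem ENNReal.one_sub_mul_add_mul_self {t : ℝ≥0∞} (ht : t ≤ 1) (x : ℝ≥0∞) :
    (1 - t) * x + t * x = x := by
  rw [← add_mul, tsub_add_cancel_of_le ht, one_mul]

theorem ENNReal.eq_zero_of_forall_natCast_mul_le {a b : ℝ≥0∞} (hb : b ≠ ∞)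
    (h : ∀ n : ℕ, (n : ℝ≥0∞) * a ≤ b) : a = 0 := by
  by_contra ha
  obtain ⟨n, hn⟩ := ENNReal.exists_nat_mul_gt ha hb
  exact (h n).not_gt hn

theorem eventually_mul_le_of_tendsto_deriv_atTop {f f' : ℝ → ℝ}
    (hf : ∀ᶠ x in 𝓝[>] 0, HasDerivAt f (f' x) x) (hf0 : ∀ᶠ x in 𝓝[>] 0, 0 ≤ f x)
    (hf' : Tendsto f' (𝓝[>] 0) atTop) (K : ℝ) : ∀ᶠ y in 𝓝[>] 0, K * y ≤ f y := by
  obtain ⟨δ, hδ, hsub⟩ := (nhdsGT_basis (0 : ℝ)).eventually_iff.1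
    (hf.and (hf0.and (hf'.eventually_ge_atTop (2 * K))))
  filter_upwards [Ioo_mem_nhdsGT hδ] with y hy
  have hIcc : Icc (y / 2) y ⊆ Ioo 0 δ :=
    fun x hx => ⟨by linarith [hx.1, hy.1], hx.2.trans_lt hy.2⟩
  -- mean value theorem on `[y/2, y]`, where `f' ≥ 2K` and `f (y/2) ≥ 0`
  obtain ⟨ξ, hξ, hslope⟩ := exists_hasDerivAt_eq_slope f f' (by linarith [hy.1] : y / 2 < y)
    (fun x hx => (hsub (hIcc hx)).1.continuousAt.continuousWithinAt)
    (fun x hx => (hsub (hIcc (Ioo_subset_Icc_self hx))).1)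
  have hfy2 := (hsub (hIcc ⟨le_rfl, by linarith [hy.1]⟩)).2.1
  have hξK := (hsub (hIcc (Ioo_subset_Icc_self hξ))).2.2
  rw [_root_.eq_div_iff (by linarith [hy.1])] at hslope
  nlinarith [hy.1]

theorem ENNReal.tendsto_ofReal_nhdsGT_zero : Tendsto ENNReal.ofReal (𝓝[>] 0) (𝓝 0) :=
  (ENNReal.continuous_ofReal.tendsto' 0 0 ENNReal.ofReal_zero).mono_left nhdsWithin_le_nhds

section ValidTest

variable {Ω : Type*} [MeasurableSpace Ω]

structure IsValidTest (H : Set (Measure Ω)) (α : ℝ≥0∞) (ε : Ω → ℝ≥0∞) : Prop where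
  measurable : Measurable ε
  le_inv : ∀ ω, ε ω ≤ α⁻¹
  lintegral_le_one : ∀ P ∈ H, ∫⁻ ω, ε ω ∂P ≤ 1

variable {H : Set (Measure Ω)} {α : ℝ≥0∞}

theorem isValidTest_const (hH : ∀ P ∈ H, IsProbabilityMeasure P) {c : ℝ≥0∞} (hc1 : c ≤ 1)
    (hcα : c ≤ α⁻¹) : IsValidTest H α fun _ => c where
  measurable := measurable_const
  le_inv _ := hcα
  lintegral_le_one P hP := by
    have := hH P hP
    simpa using hc1

theorem IsValidTest.convexComb {ε ε' : Ω → ℝ≥0∞} (hε : IsValidTest H α ε)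
    (hε' : IsValidTest H α ε') {t : ℝ≥0∞} (ht : t ≤ 1) :
    IsValidTest H α fun ω => (1 - t) * ε ω + t * ε' ω where
  measurable := (hε.measurable.const_mul _).add (hε'.measurable.const_mul _)
  le_inv ω := by
    calc (1 - t) * ε ω + t * ε' ω ≤ (1 - t) * α⁻¹ + t * α⁻¹ := by
          gcongr
          exacts [hε.le_inv ω, hε'.le_inv ω]
      _ = α⁻¹ := ENNReal.one_sub_mul_add_mul_self ht _
  lintegral_le_one P hP := by
    calc ∫⁻ ω, (1 - t) * ε ω + t * ε' ω ∂P
        = (1 - t) * ∫⁻ ω, ε ω ∂P + t * ∫⁻ ω, ε' ω ∂P := by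
          rw [lintegral_add_left (hε.measurable.const_mul _), lintegral_const_mul _ hε.measurable,
            lintegral_const_mul _ hε'.measurable]
      _ ≤ (1 - t) * 1 + t * 1 := by
          gcongr
          exacts [hε.lintegral_le_one P hP, hε'.lintegral_le_one P hP]
      _ = 1 := ENNReal.one_sub_mul_add_mul_self ht _

end ValidTest

namespace IsUtility

variable {α : ℝ≥0∞} {U D : ℝ≥0∞ → ℝ≥0∞}

theorem one_sub_mul_le_apply_comb (hU : IsUtility α U D) {x y t : ℝ≥0∞} (hx : x ∈ Icc 0 α⁻¹)
    (hy : y ∈ Icc 0 α⁻¹) (ht : t ≤ 1) : (1 - t) * U x ≤ U ((1 - t) * x + t * y) := by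
  have h := hU.concaveOn x hx y hy (1 - t) tsub_le_self
  rw [ENNReal.sub_sub_cancel one_ne_top ht] at h
  exact le_self_add.trans h

theorem apply_inv_ne_top (hU : IsUtility α U D) (hα0 : α ≠ 0) (hαtop : α ≠ ∞) :
    U α⁻¹ ≠ ∞ := by
  have h := hU.one_sub_mul_le_apply_comb (y := 0) ⟨zero_le, le_rfl⟩ ⟨le_rfl, zero_le⟩
    (by norm_num : (2 : ℝ≥0∞)⁻¹ ≤ 1)
  rw [ENNReal.one_sub_inv_two, mul_zero, add_zero] at h
  have hhalf : U (2⁻¹ * α⁻¹) ≠ ∞ := by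
    refine hU.finite_of_lt _ ?_
    rw [← ENNReal.div_eq_inv_mul]
    exact ENNReal.half_lt_self (ENNReal.inv_ne_zero.2 hαtop) (ENNReal.inv_ne_top.2 hα0)
  intro htop
  rw [htop, ENNReal.mul_top (by norm_num)] at h
  exact hhalf (top_le_iff.1 h)

theorem lintegral_ne_top {Ω : Type*} [MeasurableSpace Ω] (hU : IsUtility α U D) (hα0 : α ≠ 0)
    (hαtop : α ≠ ∞) {Q : Measure Ω} [IsFiniteMeasure Q] {ε : Ω → ℝ≥0∞}
    (hε : ∀ ω, ε ω ≤ α⁻¹) : ∫⁻ ω, U (ε ω) ∂Q ≠ ∞ :=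
  ne_top_of_le_ne_top (lintegral_const_lt_top (hU.apply_inv_ne_top hα0 hαtop)).ne
    (lintegral_mono fun ω => hU.monotoneOn ⟨zero_le, hε ω⟩ ⟨zero_le, le_rfl⟩ (hε ω))

theorem tendsto_deriv_toReal_atTop (hU : IsUtility α U D) (hαtop : α ≠ ∞) (hD0 : D 0 = ∞) :
    Tendsto (fun x : ℝ => (D (ENNReal.ofReal x)).toReal) (𝓝[>] 0) atTop := by
  have hαinv : 0 < α⁻¹ := ENNReal.inv_pos.2 hαtop
  have hD : Tendsto D (𝓝 0) (𝓝 ∞) := hD0 ▸ (hU.deriv_continuousOn.continuousAt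
    (mem_of_superset (Iio_mem_nhds hαinv) fun x hx => ⟨zero_le, le_of_lt hx⟩)).tendsto
  refine tendsto_atTop.2 fun b => ?_
  have hofReal := ENNReal.tendsto_ofReal_nhdsGT_zero
  filter_upwards [self_mem_nhdsWithin, hofReal.eventually (Iio_mem_nhds hαinv),
    (hD.comp hofReal).eventually (lt_mem_nhds ENNReal.ofReal_lt_top)] with x hx0 hxα hb
  exact (ENNReal.ofReal_le_iff_le_toReal
    (hU.deriv_finite _ (ENNReal.ofReal_pos.2 hx0) hxα)).1 hb.le

theorem exists_mul_le_apply (hU : IsUtility α U D) (hαtop : α ≠ ∞) (hD0 : D 0 = ∞) (K : ℝ)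
    {c : ℝ≥0∞} (hc : 0 < c) : ∃ v, 0 < v ∧ v < c ∧ ENNReal.ofReal K * v ≤ U v := by
  have hαinv : 0 < α⁻¹ := ENNReal.inv_pos.2 hαtop
  have hlt {c' : ℝ≥0∞} (hc' : 0 < c') : ∀ᶠ x in 𝓝[>] (0 : ℝ), ENNReal.ofReal x < c' :=
    ENNReal.tendsto_ofReal_nhdsGT_zero.eventually (Iio_mem_nhds hc')
  have hderiv : ∀ᶠ x in 𝓝[>] 0, HasDerivAt (fun t => (U (ENNReal.ofReal t)).toReal)
      (D (ENNReal.ofReal x)).toReal x := by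
    filter_upwards [self_mem_nhdsWithin, hlt hαinv] with x hx0 hxα using hU.hasDerivAt x hx0 hxα
  have hsuper := eventually_mul_le_of_tendsto_deriv_atTop hderiv
    (.of_forall fun _ => ENNReal.toReal_nonneg) (hU.tendsto_deriv_toReal_atTop hαtop hD0) K
  obtain ⟨y, hyK, hy0, hyc, hyα⟩ :=
    (hsuper.and (eventually_mem_nhdsWithin.and ((hlt hc).and (hlt hαinv)))).exists
  refine ⟨ENNReal.ofReal y, ENNReal.ofReal_pos.2 hy0, hyc, ?_⟩
  calc ENNReal.ofReal K * ENNReal.ofReal y = ENNReal.ofReal (K * y) :=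
        (ENNReal.ofReal_mul' hy0.le).symm
    _ ≤ ENNReal.ofReal (U (ENNReal.ofReal y)).toReal := ENNReal.ofReal_le_ofReal hyK
    _ = U (ENNReal.ofReal y) := ENNReal.ofReal_toReal (hU.finite_of_lt _ hyα)

theorem apply_mul_measure_eq_zero_le {Ω : Type*} [MeasurableSpace Ω] {H : Set (Measure Ω)}
    (hH : ∀ P ∈ H, IsProbabilityMeasure P) {Q : Measure Ω} (hU : IsUtility α U D)
    {εs : Ω → ℝ≥0∞} (hεs : IsValidTest H α εs)
    (hopt : ∀ ε, IsValidTest H α ε → ∫⁻ ω, U (ε ω) ∂Q ≤ ∫⁻ ω, U (εs ω) ∂Q)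
    (hS : ∫⁻ ω, U (εs ω) ∂Q ≠ ∞) {c t : ℝ≥0∞} (hc1 : c ≤ 1) (hcα : c ≤ α⁻¹) (ht : t ≤ 1) :
    U (t * c) * Q {ω | εs ω = 0} ≤ t * ∫⁻ ω, U (εs ω) ∂Q := by
  set S := ∫⁻ ω, U (εs ω) ∂Q
  set A := {ω | εs ω = 0}
  have hA : MeasurableSet A := hεs.measurable (measurableSet_singleton 0)
  have hmix := hεs.convexComb (isValidTest_const hH hc1 hcα) ht
  have hpt (ω : Ω) : A.indicator (fun _ => U (t * c)) ω + (1 - t) * U (εs ω) ≤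
      U ((1 - t) * εs ω + t * c) := by
    by_cases h : εs ω = 0
    · simp [A, h, hU.map_zero]
    · rw [indicator_of_notMem (show ω ∉ A from h), zero_add]
      exact hU.one_sub_mul_le_apply_comb ⟨zero_le, hεs.le_inv ω⟩ ⟨zero_le, hcα⟩ ht
  have h1t : 1 - t ≠ ∞ := ENNReal.sub_ne_top ENNReal.one_ne_top
  have hgain : (1 - t) * S + U (t * c) * Q A ≤ (1 - t) * S + t * S := calc
    _ = ∫⁻ ω, A.indicator (fun _ => U (t * c)) ω + (1 - t) * U (εs ω) ∂Q := by
      rw [lintegral_add_left (measurable_const.indicator hA), lintegral_indicator_const hA,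
        lintegral_const_mul' _ _ h1t, add_comm]
    _ ≤ S := (lintegral_mono hpt).trans (hopt _ hmix)
    _ = (1 - t) * S + t * S := (ENNReal.one_sub_mul_add_mul_self ht S).symm
  exact (ENNReal.add_le_add_iff_left (ENNReal.mul_ne_top h1t hS)).1 hgain

end IsUtility

/-- Q-almost-sure positivity of the expected-utility optimal test: if
`0 < α < ∞` and `U` is a utility function on `[0, 1/α]` whose derivative
satisfies `U'(0) = lim_{x↓0} U'(x) = ∞`, then any valid level-`α` continuous
test `ε*` for `H` maximizing `ε ↦ E_Q[U(ε)]` over valid level-`α` continuous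
tests satisfies `ε* > 0` `Q`-almost surely. -/
theorem expected_utility_optimizer_ae_pos
    {Ω : Type*} [MeasurableSpace Ω]
    (H : Set (Measure Ω)) (hH : ∀ P ∈ H, IsProbabilityMeasure P)
    (Q : Measure Ω) [IsProbabilityMeasure Q]
    (α : ℝ≥0∞) (hα0 : 0 < α) (hαtop : α ≠ ∞)
    (U D : ℝ≥0∞ → ℝ≥0∞) (hU : IsUtility α U D) (hD0 : D 0 = ∞)
    (εs : Ω → ℝ≥0∞) (hεsm : Measurable εs) (hεsb : ∀ ω, εs ω ≤ α⁻¹)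
    (hεsval : ∀ P ∈ H, ∫⁻ ω, εs ω ∂P ≤ 1)
    (hopt : ∀ ε : Ω → ℝ≥0∞, Measurable ε → (∀ ω, ε ω ≤ α⁻¹) →
      (∀ P ∈ H, ∫⁻ ω, ε ω ∂P ≤ 1) → ∫⁻ ω, U (ε ω) ∂Q ≤ ∫⁻ ω, U (εs ω) ∂Q) :
    ∀ᵐ ω ∂Q, 0 < εs ω := by
  suffices hA : Q {ω | εs ω = 0} = 0 by simpa [ae_iff, pos_iff_ne_zero] using hA
  have hS := hU.lintegral_ne_top hα0.ne' hαtop (Q := Q) hεsb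
  set c := min 1 α⁻¹
  have hc0 : 0 < c := lt_min one_pos (ENNReal.inv_pos.2 hαtop)
  have hctop : c ≠ ∞ := ne_top_of_le_ne_top ENNReal.one_ne_top (min_le_left _ _)
  refine ENNReal.eq_zero_of_forall_natCast_mul_le (ENNReal.div_ne_top hS hc0.ne') fun n => ?_
  obtain ⟨v, hv0, hvc, hv⟩ := hU.exists_mul_le_apply hαtop hD0 n hc0
  rw [ENNReal.ofReal_natCast] at hv
  have hgain := hU.apply_mul_measure_eq_zero_le hH ⟨hεsm, hεsb, hεsval⟩
    (fun ε hε => hopt ε hε.1 hε.2 hε.3) hS (min_le_left _ _) (min_le_right _ _)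
    (t := v / c) (ENNReal.div_le_of_le_mul (by simpa using hvc.le))
  rw [ENNReal.div_mul_cancel hc0.ne' hctop] at hgain
  refine (ENNReal.mul_le_mul_iff_right hv0.ne' (ne_top_of_lt hvc)).1 ?_
  calc v * (n * Q {ω | εs ω = 0}) = n * v * Q {ω | εs ω = 0} := by ring
    _ ≤ U v * Q {ω | εs ω = 0} := by gcongr
    _ ≤ v / c * ∫⁻ ω, U (εs ω) ∂Q := hgain
    _ = v * ((∫⁻ ω, U (εs ω) ∂Q) / c) := by rw [div_eq_mul_inv, div_eq_mul_inv]; ring
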